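/- Let g ∈ Equiv.Perm (Fin n) have disjoint cycle decomposition into t cycles of lengths ℓ 1, …, ℓ t which are pairwise coprime, and let G = ⟨g⟩ (so d = orderOf g = ℓ 1 ⋯ ℓ t). Then P(G) is, up to lattice-preserving affine equivalence, a product of unimodular simplices of dimensions ℓ 1 − 1, …, ℓ t − 1: there exist affine maps φ : Matrix (Fin n) (Fin n) ℝ →ᵃ[ℝ] (Π i : Fin t, Fin (ℓ i) → ℝ) and ψ : (Π i : Fin t, Fin (ℓ i) → ℝ) →ᵃ[ℝ] Matrix (Fin n) (Fin n) ℝ, both mapping points with all coordinates in ℤ to points with all coordinates in ℤ, such that for every k ∈ Fin d, φ (M(g^k)) is the point whose i-th component is the standard basis vector of Fin (ℓ i) → ℝ indexed by k mod ℓ i, and ψ maps that point back to M(g^k). In particular φ restricts to a bijection from P(G) onto the product of standard simplices {f | ∀ i, f i ∈ stdSimplex ℝ (Fin (ℓ i))}. -/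

import Mathlib

/-!
Pick a point `a i` on the cycle `cᵢ` of length `ℓ i`. The entries `A (a i) (g ^ j (a i))`,
`j < ℓ i`, form a linear map `φ` which sends `M(g ^ k)` to the tuple of basis vectors indexed by
the residues `k mod ℓ i`; by the Chinese remainder theorem every such tuple occurs, so `φ` maps
the vertices of `P(⟨g⟩)` onto the vertices of the product of simplices. Conversely, as the
cycles are disjoint, `M(g ^ k) = 1 + ∑ i, (M(cᵢ ^ (k mod ℓ i)) - 1)` is an affine function `ψ`,
with integer coefficients, of those basis vectors. Since `ψ ∘ φ` fixes the vertices, it fixes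
their affine span, so `φ` is injective on the polytope.
-/

noncomputable def permPolytope (n : ℕ) (G : Subgroup (Equiv.Perm (Fin n))) :
    Set (Matrix (Fin n) (Fin n) ℝ) :=
  convexHull ℝ {M : Matrix (Fin n) (Fin n) ℝ | ∃ σ ∈ G, M = σ.permMatrix ℝ}

open Finset
open Equiv (Perm)

namespace Equiv.Perm

theorem permMatrix_apply {α R : Type*} [DecidableEq α] [Zero R] [One R] (σ : Perm α)
    (p q : α) :
    σ.permMatrix R p q = if σ p = q then 1 else 0 := by
  simp [permMatrix, PEquiv.toMatrix_apply, eq_comm]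

variable {α : Type*} [Fintype α] [DecidableEq α]

theorem cycleOf_pow_apply (g : Perm α) (x y : α) (k : ℕ) :
    (g.cycleOf x ^ k) y = if g.SameCycle x y then (g ^ k) y else y := by
  split_ifs with h
  · rw [h.cycleOf_eq, cycleOf_pow_apply_self]
  · exact pow_apply_eq_self_of_apply_eq_self (by rw [cycleOf_apply g x y, if_neg h]) k

theorem pow_apply_eq_pow_apply_iff_modEq {g : Perm α} {x : α} (hx : x ∈ g.support) {m k : ℕ} :
    (g ^ m) x = (g ^ k) x ↔ m ≡ k [MOD #(g.cycleOf x).support] :=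
  (g.isCycleOn_support_cycleOf x).pow_apply_eq_pow_apply
    (mem_support_cycleOf_iff.mpr ⟨.refl g x, hx⟩)

theorem cycleOf_pow_mod_card_support (g : Perm α) (x : α) (k : ℕ) :
    g.cycleOf x ^ (k % #(g.cycleOf x).support) = g.cycleOf x ^ k := by
  by_cases hx : g x = x
  · simp [cycleOf_eq_one_iff g |>.mpr hx]
  · rw [← (isCycle_cycleOf g hx).orderOf, pow_mod_orderOf]

theorem card_support_cycleOf_mem_cycleType {g : Perm α} {x : α} (hx : x ∈ g.support) :
    #(g.cycleOf x).support ∈ g.cycleType := by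
  rw [cycleType_def]
  exact Multiset.mem_map_of_mem _ (cycleOf_mem_cycleFactorsFinset_iff.mpr hx)

theorem exists_card_support_cycleOf_eq {g : Perm α} {m : ℕ} (hm : m ∈ g.cycleType) :
    ∃ x ∈ g.support, #(g.cycleOf x).support = m := by
  rw [cycleType_def] at hm
  obtain ⟨c, hc, rfl⟩ := Multiset.mem_map.mp hm
  obtain ⟨x, hx⟩ := (mem_cycleFactorsFinset_iff.mp hc).1.nonempty_support
  exact ⟨x, mem_cycleFactorsFinset_support_le hc hx, by rw [← cycle_is_cycleOf hx hc]; rfl⟩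

theorem cycleOf_eq_of_card_support_eq {g : Perm α} (hg : g.cycleType.Nodup) {x y : α}
    (hx : x ∈ g.support) (hy : y ∈ g.support)
    (h : #(g.cycleOf x).support = #(g.cycleOf y).support) : g.cycleOf x = g.cycleOf y := by
  rw [cycleType_def] at hg
  exact Multiset.inj_on_of_nodup_map hg _ (cycleOf_mem_cycleFactorsFinset_iff.mpr hx) _
    (cycleOf_mem_cycleFactorsFinset_iff.mpr hy) h

theorem exists_cycleOf_representatives {ι : Type*} [Fintype ι] {g : Perm α} {ℓ : ι → ℕ}
    (hℓ : Function.Injective ℓ) (hg : g.cycleType = Multiset.map ℓ Finset.univ.val) :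
    ∃ a : ι → α, (∀ i, #(g.cycleOf (a i)).support = ℓ i) ∧
      ∀ p ∈ g.support, ∃! i, g.SameCycle (a i) p := by
  have hmem : ∀ i, ℓ i ∈ g.cycleType := fun i =>
    hg ▸ Multiset.mem_map_of_mem ℓ (mem_univ_val i)
  choose a ha hcard using fun i => exists_card_support_cycleOf_eq (hmem i)
  refine ⟨a, hcard, fun p hp => ?_⟩
  obtain ⟨i, -, hi⟩ := Multiset.mem_map.mp (hg ▸ card_support_cycleOf_mem_cycleType hp)
  have hnodup : g.cycleType.Nodup := hg ▸ univ.nodup.map hℓ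
  refine ⟨i, ?_, fun j hj => hℓ ?_⟩
  · show g.SameCycle (a i) p
    rw [sameCycle_iff_cycleOf_eq_of_mem_support (ha i) hp]
    exact cycleOf_eq_of_card_support_eq hnodup (ha i) hp (by rw [hcard, hi])
  · rw [← hcard, hj.cycleOf_eq, hi]

theorem permMatrix_pow_eq_one_add_sum_cycleOf {R ι : Type*} [Ring R] [Fintype ι] {g : Perm α}
    {a : ι → α} (ha : ∀ p ∈ g.support, ∃! i, g.SameCycle (a i) p) (k : ℕ) :
    (g ^ k).permMatrix R = 1 + ∑ i, ((g.cycleOf (a i) ^ k).permMatrix R - 1) := by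
  ext p q
  simp only [Matrix.add_apply, Matrix.sum_apply, Matrix.sub_apply, Matrix.one_apply,
    permMatrix_apply, cycleOf_pow_apply]
  by_cases hp : p ∈ g.support
  · obtain ⟨i, hi, huniq⟩ := ha p hp
    rw [Finset.sum_eq_single i (fun j _ hj => by simp [mt (huniq j) hj]) (by simp), if_pos hi]
    abel
  · have hfix : (g ^ k) p = p := pow_apply_eq_self_of_apply_eq_self (notMem_support.mp hp) k
    simp [hfix]

theorem setOf_permMatrix_mem_zpowers (R : Type*) [CommRing R] (g : Perm α) :
    {M : Matrix α α R | ∃ σ ∈ Subgroup.zpowers g, M = σ.permMatrix R} =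
      Set.range fun k : ℕ => (g ^ k).permMatrix R := by
  ext M
  simp only [Set.mem_ofPred_eq, Set.mem_range,
    ← (isOfFinOrder_of_finite g).mem_powers_iff_mem_zpowers, Submonoid.mem_powers_iff]
  constructor
  · rintro ⟨_, ⟨k, rfl⟩, rfl⟩; exact ⟨k, rfl⟩
  · rintro ⟨k, rfl⟩; exact ⟨_, ⟨k, rfl⟩, rfl⟩

end Equiv.Perm

theorem Nat.exists_mod_eq_of_pairwise_coprime {ι : Type*} [Fintype ι] {ℓ : ι → ℕ}
    (hcop : Pairwise fun i j => Nat.Coprime (ℓ i) (ℓ j)) (m : ∀ i, Fin (ℓ i)) :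
    ∃ k, ∀ i, k % ℓ i = m i := by
  obtain ⟨k, hk⟩ := Nat.chineseRemainderOfFinset (fun i => (m i : ℕ)) ℓ univ
    (fun i _ => (m i).pos.ne') (fun i _ j _ hij => hcop hij)
  exact ⟨k, fun i => by simpa [Nat.ModEq, Nat.mod_eq_of_lt (m i).isLt] using hk i (mem_univ i)⟩

theorem AffineMap.bijOn_convexHull_of_leftInvOn {𝕜 E F : Type*} [Ring 𝕜] [PartialOrder 𝕜]
    [AddCommGroup E] [AddCommGroup F] [Module 𝕜 E] [Module 𝕜 F] (φ : E →ᵃ[𝕜] F)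
    (ψ : F →ᵃ[𝕜] E) {s : Set E} (h : Set.LeftInvOn ψ φ s) :
    Set.BijOn φ (convexHull 𝕜 s) (convexHull 𝕜 (φ '' s)) := by
  have hspan : Set.LeftInvOn ψ φ (affineSpan 𝕜 s) :=
    AffineMap.eqOn_affineSpan (f := ψ.comp φ) (g := AffineMap.id 𝕜 E) h
  rw [← φ.image_convexHull]
  exact (hspan.mono (convexHull_subset_affineSpan s)).injOn.bijOn_image

theorem convexHull_pi_range_single_eq {𝕜 ι : Type*} [Field 𝕜] [LinearOrder 𝕜]
    [IsStrictOrderedRing 𝕜] [Fintype ι] {κ : ι → Type*} [∀ i, Fintype (κ i)]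
    [∀ i, DecidableEq (κ i)] :
    convexHull 𝕜 (Set.univ.pi fun i => Set.range fun j : κ i => Pi.single j (1 : 𝕜)) =
      {f | ∀ i, f i ∈ stdSimplex 𝕜 (κ i)} := by
  ext f
  simp [convexHull_pi, convexHull_rangle_single_eq_stdSimplex]

section

variable {α ι : Type*} (R : Type*) [CommRing R] (g : Perm α) (a : ι → α) (ℓ : ι → ℕ)

noncomputable def orbitEntryMap : Matrix α α R →ₗ[R] (Π i, Fin (ℓ i) → R) :=
  LinearMap.pi fun i => LinearMap.pi fun j =>
    Matrix.entryLinearMap R R (a i) ((g ^ (j : ℕ)) (a i))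

theorem orbitEntryMap_apply (A : Matrix α α R) (i : ι) (j : Fin (ℓ i)) :
    orbitEntryMap R g a ℓ A i j = A (a i) ((g ^ (j : ℕ)) (a i)) := rfl

variable [Fintype α] [DecidableEq α] [Fintype ι]

noncomputable def cyclePowSumMap : (Π i, Fin (ℓ i) → R) →ᵃ[R] Matrix α α R :=
  (∑ i, ∑ j : Fin (ℓ i),
      ((LinearMap.proj j : (Fin (ℓ i) → R) →ₗ[R] R) ∘ₗ LinearMap.proj i).smulRight
        ((g.cycleOf (a i) ^ (j : ℕ)).permMatrix R - 1)).toAffineMap + AffineMap.const R _ 1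

theorem cyclePowSumMap_apply (v : Π i, Fin (ℓ i) → R) :
    cyclePowSumMap R g a ℓ v =
      1 + ∑ i, ∑ j : Fin (ℓ i),
        v i j • ((g.cycleOf (a i) ^ (j : ℕ)).permMatrix R - 1) := by
  simp [cyclePowSumMap, add_comm]

end

section

open Equiv.Perm

variable {α ι R : Type*} [CommRing R] [Fintype α] [DecidableEq α] {g : Perm α} {a : ι → α}
  {ℓ : ι → ℕ}

theorem orbitEntryMap_permMatrix_pow (hℓ : ∀ i, #(g.cycleOf (a i)).support = ℓ i) {k : ℕ}
    {m : Π i, Fin (ℓ i)} (hm : ∀ i, (m i : ℕ) = k % ℓ i) :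
    orbitEntryMap R g a ℓ ((g ^ k).permMatrix R) = fun i => Pi.single (m i) 1 := by
  funext i j
  have hai : a i ∈ g.support :=
    mem_support.mpr (support_cycleOf_nonempty.mp (card_pos.mp (hℓ i ▸ j.pos)))
  rw [orbitEntryMap_apply, permMatrix_apply, Pi.single_apply]
  refine if_congr ?_ rfl rfl
  rw [pow_apply_eq_pow_apply_iff_modEq hai, hℓ, Nat.ModEq, Nat.mod_eq_of_lt j.isLt, Fin.ext_iff,
    hm, eq_comm]

variable [Fintype ι]

theorem orbitEntryMap_image_range_permMatrix_pow (hℓ : ∀ i, #(g.cycleOf (a i)).support = ℓ i)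
    (hℓ0 : ∀ i, 0 < ℓ i) (hcop : Pairwise fun i j => Nat.Coprime (ℓ i) (ℓ j)) :
    orbitEntryMap R g a ℓ '' Set.range (fun k : ℕ => (g ^ k).permMatrix R) =
      Set.univ.pi fun i => Set.range fun j : Fin (ℓ i) => Pi.single j 1 := by
  ext f
  constructor
  · rintro ⟨_, ⟨k, rfl⟩, rfl⟩ i -
    rw [orbitEntryMap_permMatrix_pow hℓ (m := fun i => ⟨k % ℓ i, Nat.mod_lt _ (hℓ0 i)⟩)
      fun _ => rfl]
    exact ⟨_, rfl⟩
  · intro hf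
    choose m hm using fun i => hf i (Set.mem_univ i)
    obtain ⟨k, hk⟩ := Nat.exists_mod_eq_of_pairwise_coprime hcop m
    refine ⟨_, ⟨k, rfl⟩, ?_⟩
    rw [orbitEntryMap_permMatrix_pow hℓ (fun i => (hk i).symm)]
    exact funext hm

theorem cyclePowSumMap_single (m : Π i, Fin (ℓ i)) :
    cyclePowSumMap R g a ℓ (fun i => Pi.single (m i) 1) =
      1 + ∑ i, ((g.cycleOf (a i) ^ (m i : ℕ)).permMatrix R - 1) := by
  simp [cyclePowSumMap_apply, Pi.single_apply, ite_smul]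

theorem cyclePowSumMap_single_of_mod (hℓ : ∀ i, #(g.cycleOf (a i)).support = ℓ i)
    (ha : ∀ p ∈ g.support, ∃! i, g.SameCycle (a i) p) {k : ℕ} {m : Π i, Fin (ℓ i)}
    (hm : ∀ i, (m i : ℕ) = k % ℓ i) :
    cyclePowSumMap R g a ℓ (fun i => Pi.single (m i) 1) = (g ^ k).permMatrix R := by
  rw [cyclePowSumMap_single, permMatrix_pow_eq_one_add_sum_cycleOf ha]
  simp only [hm, ← hℓ, cycleOf_pow_mod_card_support]

theorem exists_intCast_cyclePowSumMap_apply {v : Π i, Fin (ℓ i) → R}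
    (hv : ∀ i j, ∃ z : ℤ, v i j = z) (p q : α) :
    ∃ z : ℤ, cyclePowSumMap R g a ℓ v p q = z := by
  let S := (Int.castRingHom R).range
  have hS : ∀ x, x ∈ S ↔ ∃ z : ℤ, x = z := fun x => by simp [S, eq_comm]
  have hperm : ∀ (σ : Perm α) p q, σ.permMatrix R p q ∈ S := fun σ p q => by
    rw [permMatrix_apply]; split_ifs; exacts [one_mem S, zero_mem S]
  have hone : ∀ p q, (1 : Matrix α α R) p q ∈ S := fun p q => by
    simpa [Matrix.one_apply] using hperm 1 p q
  rw [← hS, cyclePowSumMap_apply]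
  simp only [Matrix.add_apply, Matrix.sum_apply, Matrix.smul_apply, Matrix.sub_apply, smul_eq_mul]
  exact add_mem (hone p q) (sum_mem fun i _ => sum_mem fun j _ =>
    mul_mem ((hS _).mpr (hv i j)) (sub_mem (hperm _ p q) (hone p q)))

end

/-- If the cycle lengths `ℓ 1, …, ℓ t` of `g` are pairwise coprime, then `P(⟨g⟩)` is,
up to lattice-preserving affine equivalence, a product of unimodular simplices of
dimensions `ℓ 1 - 1, …, ℓ t - 1`. -/
theorem permPolytope_product_of_simplices
    (n t : ℕ) (ℓ : Fin t → ℕ) (hℓ : ∀ i, 2 ≤ ℓ i)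
    (hcop : ∀ i j : Fin t, i ≠ j → Nat.Coprime (ℓ i) (ℓ j))
    (g : Equiv.Perm (Fin n))
    (hg : g.cycleType = Multiset.map ℓ Finset.univ.val) :
    ∃ (φ : Matrix (Fin n) (Fin n) ℝ →ᵃ[ℝ] (Π i : Fin t, Fin (ℓ i) → ℝ))
      (ψ : (Π i : Fin t, Fin (ℓ i) → ℝ) →ᵃ[ℝ] Matrix (Fin n) (Fin n) ℝ),
      (∀ A : Matrix (Fin n) (Fin n) ℝ,
        (∀ p q : Fin n, ∃ z : ℤ, A p q = (z : ℝ)) →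
        ∀ (i : Fin t) (j : Fin (ℓ i)), ∃ z : ℤ, φ A i j = (z : ℝ)) ∧
      (∀ v : Π i : Fin t, Fin (ℓ i) → ℝ,
        (∀ (i : Fin t) (j : Fin (ℓ i)), ∃ z : ℤ, v i j = (z : ℝ)) →
        ∀ p q : Fin n, ∃ z : ℤ, ψ v p q = (z : ℝ)) ∧
      (∀ k : Fin (orderOf g),
        φ ((g ^ (k : ℕ)).permMatrix ℝ)
          = fun i : Fin t =>
              Pi.single (⟨(k : ℕ) % ℓ i,
                Nat.mod_lt _ (lt_of_lt_of_le Nat.zero_lt_two (hℓ i))⟩ : Fin (ℓ i))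
                (1 : ℝ)) ∧
      (∀ k : Fin (orderOf g),
        ψ (fun i : Fin t =>
              Pi.single (⟨(k : ℕ) % ℓ i,
                Nat.mod_lt _ (lt_of_lt_of_le Nat.zero_lt_two (hℓ i))⟩ : Fin (ℓ i))
                (1 : ℝ))
          = (g ^ (k : ℕ)).permMatrix ℝ) ∧
      Set.BijOn φ (permPolytope n (Subgroup.zpowers g))
        {f : Π i : Fin t, Fin (ℓ i) → ℝ | ∀ i, f i ∈ stdSimplex ℝ (Fin (ℓ i))} := by
  have hℓ0 : ∀ i, 0 < ℓ i := fun i => lt_of_lt_of_le two_pos (hℓ i)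
  have hinj : Function.Injective ℓ := fun i j hij => by
    by_contra hne
    have := hcop i j hne
    rw [hij, Nat.coprime_self] at this
    linarith [hℓ j]
  obtain ⟨a, hcard, hrep⟩ := Equiv.Perm.exists_cycleOf_representatives hinj hg
  let φ := (orbitEntryMap ℝ g a ℓ).toAffineMap
  have hvertex : ∀ k : ℕ, φ ((g ^ k).permMatrix ℝ) =
      fun i => Pi.single (⟨k % ℓ i, Nat.mod_lt _ (hℓ0 i)⟩ : Fin (ℓ i)) 1 :=
    fun k => orbitEntryMap_permMatrix_pow hcard fun _ => rfl
  have hleftInv : Set.LeftInvOn (cyclePowSumMap ℝ g a ℓ) φ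
      (Set.range fun k : ℕ => (g ^ k).permMatrix ℝ) := by
    rintro _ ⟨k, rfl⟩
    rw [hvertex, cyclePowSumMap_single_of_mod hcard hrep fun _ => rfl]
  refine ⟨φ, cyclePowSumMap ℝ g a ℓ, fun A hA i j => hA _ _,
    fun v hv => exists_intCast_cyclePowSumMap_apply hv, fun k => hvertex k,
    fun k => cyclePowSumMap_single_of_mod hcard hrep fun _ => rfl, ?_⟩
  rw [permPolytope, Equiv.Perm.setOf_permMatrix_mem_zpowers, ← convexHull_pi_range_single_eq,
    ← orbitEntryMap_image_range_permMatrix_pow hcard hℓ0 hcop]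
  exact AffineMap.bijOn_convexHull_of_leftInvOn φ _ hleftInv
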